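/- Let (x_k)_{k=1}^{∞} be a Kritzinger sequence in [0,1] (with arbitrary finite initial segment x_1,…,x_{n₀}, each subsequent point chosen greedily). Then for all sufficiently large N ∈ ℕ there exists an integer n with N ≤ n ≤ 100·N such that max over x ∈ [0,1] of |∫₀^x (#{1 ≤ k ≤ n : x_k ≤ y} − n·y) dy| ≤ 2·n^{1/3}. -/

import Mathlib

/-- The counting function of the first `n` terms (indexed `1,…,n`) of a sequence:
`#{1 ≤ k ≤ n : x_k ≤ y}`. -/
noncomputable def seqCount (x : ℕ → ℝ) (n : ℕ) (y : ℝ) : ℕ :=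
  ((Finset.Icc 1 n).filter (fun k => x k ≤ y)).card

/-- `x` is a Kritzinger sequence with initial segment `x_1,…,x_{n₀}`: all terms lie
in `[0,1]` and, for every `n ≥ n₀`, the point `x_{n+1}` is a global minimizer over
`z ∈ [0,1]` of `z ↦ ∫₀¹ (#{1 ≤ k ≤ n : x_k ≤ y} + 1_{[z,1]}(y) − (n+1)y)² dy`. -/
def IsKritzinger (x : ℕ → ℝ) (n₀ : ℕ) : Prop :=
  (∀ k, x k ∈ Set.Icc (0 : ℝ) 1) ∧
  ∀ n, n₀ ≤ n → ∀ z ∈ Set.Icc (0 : ℝ) 1,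
    (∫ y in (0:ℝ)..1,
        ((seqCount x n y : ℝ) + (if x (n + 1) ≤ y then (1:ℝ) else 0)
          - ((n : ℝ) + 1) * y) ^ 2)
      ≤ ∫ y in (0:ℝ)..1,
          ((seqCount x n y : ℝ) + (if z ≤ y then (1:ℝ) else 0)
            - ((n : ℝ) + 1) * y) ^ 2

/-!
With `G_n(y) = #{k ≤ n : x_k ≤ y} - n y` and `D_n(t) = ∫₀ᵗ G_n`, the function `D_n + n t² / 2`
is convex, being a primitive of the counting function, and `D_n(0) = 0`. Expanding the square in
the greedy step, with `z` a maximum point of `D_n` on `[0,1]`, gives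
`L_{n+1} ≤ L_n + 1/3 - 2 ε_n`, where `L_n = ∫₀¹ G_n²` and `ε_n = ∫₀¹ (D_n(z) - D_n)`.
Since `L_n ≥ 0`, telescoping over `N ≤ n < 100 N` forces `ε_n ≤ 1/5` for some such `n`.
If `H` is the oscillation of `D_n` on `[0,1]`, the trapezoid bound for `D_n + n t² / 2` on an
interval of length `δ` ending at a minimum point of `D_n` gives `ε_n ≥ δ H / 2 - n δ³ / 12`;
taking `δ = n^{-1/3} / 2` yields `H ≤ 2 n^{1/3}`, and `H` bounds `|D_n|` because `D_n(0) = 0`.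
-/

open MeasureTheory Set Interval

theorem Monotone.convexOn_intervalIntegral {F : ℝ → ℝ} (hF : Monotone F) (a : ℝ) :
    ConvexOn ℝ univ fun t => ∫ y in a..t, F y := by
  have hint : ∀ u v : ℝ, IntervalIntegrable F volume u v := fun _ _ => hF.intervalIntegrable
  refine convexOn_of_slope_mono_adjacent convex_univ fun {x y z} _ _ hxy hyz => ?_
  rw [intervalIntegral.integral_interval_sub_left (hint a y) (hint a x),
    intervalIntegral.integral_interval_sub_left (hint a z) (hint a y)]
  have hleft : ∫ s in x..y, F s ≤ (y - x) * F y := by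
    simpa using intervalIntegral.integral_mono_on hxy.le (hint x y) intervalIntegrable_const
      fun s hs => hF hs.2
  have hright : (z - y) * F y ≤ ∫ s in y..z, F s := by
    simpa using intervalIntegral.integral_mono_on hyz.le intervalIntegrable_const (hint y z)
      fun s hs => hF hs.1
  calc (∫ s in x..y, F s) / (y - x) ≤ F y := by rwa [div_le_iff₀ (sub_pos.2 hxy), mul_comm]
    _ ≤ (∫ s in y..z, F s) / (z - y) := by rwa [le_div_iff₀ (sub_pos.2 hyz), mul_comm]

theorem convexOn_intervalIntegral_add_sq {G : ℝ → ℝ} {c : ℝ}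
    (hG : Monotone fun y => G y + c * y) :
    ConvexOn ℝ univ fun t => (∫ y in (0 : ℝ)..t, G y) + c / 2 * t ^ 2 := by
  have hlin : ∀ t : ℝ, IntervalIntegrable (fun y => c * y) volume 0 t :=
    fun t => (continuous_const_mul c).intervalIntegrable 0 t
  have hint : ∀ t : ℝ, IntervalIntegrable G volume 0 t :=
    fun t => by simpa using hG.intervalIntegrable.sub (hlin t)
  convert hG.convexOn_intervalIntegral 0 using 2 with t
  rw [intervalIntegral.integral_add (hint t) (hlin t), intervalIntegral.integral_const_mul,
    integral_id]
  ring

theorem ConvexOn.mul_le_chord {f : ℝ → ℝ} {s : Set ℝ} {a r b : ℝ} (hf : ConvexOn ℝ s f)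
    (ha : a ∈ s) (hb : b ∈ s) (har : a ≤ r) (hrb : r ≤ b) :
    (b - a) * f r ≤ (b - r) * f a + (r - a) * f b := by
  rcases (har.trans hrb).eq_or_lt with rfl | hab
  · obtain rfl : r = a := le_antisymm hrb har
    simp
  have hba : 0 < b - a := sub_pos.2 hab
  have hr : (b - r) / (b - a) * a + (r - a) / (b - a) * b = r := by field_simp; ring
  have := hf.2 ha hb (div_nonneg (sub_nonneg.2 hrb) hba.le) (div_nonneg (sub_nonneg.2 har) hba.le)
    (by field_simp; ring)
  simp only [smul_eq_mul, hr] at this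
  rw [div_mul_eq_mul_div, div_mul_eq_mul_div, ← add_div, le_div_iff₀ hba] at this
  linarith

theorem ConvexOn.integral_le_trapezoid {f : ℝ → ℝ} {a b : ℝ} (hab : a ≤ b)
    (hf : ConvexOn ℝ (Icc a b) f) (hint : IntervalIntegrable f volume a b) :
    ∫ r in a..b, f r ≤ (b - a) * (f a + f b) / 2 := by
  rcases hab.eq_or_lt with rfl | hab
  · simp
  have hchord : ∫ r in a..b, (b - a) * f r ≤ ∫ r in a..b, ((b - r) * f a + (r - a) * f b) :=
    intervalIntegral.integral_mono_on hab.le (hint.const_mul _)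
      (by apply Continuous.intervalIntegrable; fun_prop)
      fun r hr => hf.mul_le_chord (left_mem_Icc.2 hab.le) (right_mem_Icc.2 hab.le) hr.1 hr.2
  have hlin : ∀ r : ℝ, (b - r) * f a + (r - a) * f b = (b * f a - a * f b) + (f b - f a) * r :=
    fun r => by ring
  simp only [hlin] at hchord
  rw [intervalIntegral.integral_const_mul, intervalIntegral.integral_add intervalIntegrable_const
    ((continuous_const_mul _).intervalIntegrable _ _), intervalIntegral.integral_const,
    intervalIntegral.integral_const_mul, integral_id, smul_eq_mul] at hchord
  refine le_of_mul_le_mul_left (hchord.trans_eq ?_) (sub_pos.2 hab)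
  ring

theorem integral_le_trapezoid_of_convexOn_add_sq {D : ℝ → ℝ} {c a b : ℝ} (hab : a ≤ b)
    (hD : ConvexOn ℝ (Icc a b) fun t => D t + c / 2 * t ^ 2)
    (hint : IntervalIntegrable D volume a b) :
    ∫ t in a..b, D t ≤ (b - a) * (D a + D b) / 2 + c * (b - a) ^ 3 / 12 := by
  have hsq : IntervalIntegrable (fun t : ℝ => c / 2 * t ^ 2) volume a b :=
    (continuous_const.mul (continuous_pow 2)).intervalIntegrable _ _
  have htrap := hD.integral_le_trapezoid hab (hint.add hsq)
  rw [intervalIntegral.integral_add hint hsq, intervalIntegral.integral_const_mul,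
    integral_pow] at htrap
  linarith

theorem integral_sub_ge_of_convexOn_add_sq {D : ℝ → ℝ} {c z t₀ δ : ℝ}
    (hD : ConvexOn ℝ (Icc 0 1) fun t => D t + c / 2 * t ^ 2)
    (hcont : ContinuousOn D (Icc 0 1)) (hmax : IsMaxOn D (Icc 0 1) z) (ht₀ : t₀ ∈ Icc 0 1)
    (hδ : δ ∈ Icc (0 : ℝ) (1 / 2)) :
    δ * (D z - D t₀) / 2 - c * δ ^ 3 / 12 ≤ ∫ t in (0 : ℝ)..1, (D z - D t) := by
  obtain ⟨a, b, ha, hb, rfl, hend⟩ : ∃ a b, 0 ≤ a ∧ b ≤ 1 ∧ δ = b - a ∧ (a = t₀ ∨ b = t₀) := by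
    rcases le_total t₀ (1 / 2) with h | h
    · exact ⟨t₀, t₀ + δ, ht₀.1, by linarith [hδ.2], by ring, Or.inl rfl⟩
    · exact ⟨t₀ - δ, t₀, by linarith [hδ.2], ht₀.2, by ring, Or.inr rfl⟩
  have hab : a ≤ b := sub_nonneg.1 hδ.1
  have hsub : Icc a b ⊆ Icc 0 1 := Icc_subset_Icc ha hb
  have hint : IntervalIntegrable D volume a b :=
    (hcont.mono (by rwa [uIcc_of_le hab])).intervalIntegrable
  have hint01 : IntervalIntegrable (fun t => D z - D t) volume 0 1 :=
    intervalIntegrable_const.sub (hcont.mono (by rw [uIcc_of_le zero_le_one])).intervalIntegrable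
  have htrap := integral_le_trapezoid_of_convexOn_add_sq hab
    (hD.subset hsub (convex_Icc a b)) hint
  have hendpts : D a + D b ≤ D z + D t₀ := by
    rcases hend with rfl | rfl
    · linarith [isMaxOn_iff.1 hmax b (hsub (right_mem_Icc.2 hab))]
    · linarith [isMaxOn_iff.1 hmax a (hsub (left_mem_Icc.2 hab))]
  calc _ ≤ ∫ t in a..b, (D z - D t) := by
        rw [intervalIntegral.integral_sub intervalIntegrable_const hint,
          intervalIntegral.integral_const, smul_eq_mul]
        linarith [mul_le_mul_of_nonneg_left hendpts hδ.1]
    _ ≤ _ :=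
        intervalIntegral.integral_mono_interval ha hab hb
          ((ae_restrict_mem measurableSet_Ioc).mono fun t ht =>
            sub_nonneg.2 (isMaxOn_iff.1 hmax t ⟨ht.1.le, ht.2⟩)) hint01

theorem le_two_mul_rpow_of_forall {c H : ℝ} (hc : 1 ≤ c)
    (h : ∀ δ ∈ Icc (0 : ℝ) (1 / 2), δ * H / 2 - c * δ ^ 3 / 12 ≤ 1 / 5) :
    H ≤ 2 * c ^ (1 / 3 : ℝ) := by
  set u := c ^ (1 / 3 : ℝ) with hu
  have hu1 : 1 ≤ u := Real.one_le_rpow hc (by norm_num)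
  have hu3 : u ^ 3 = c := by
    rw [hu, ← Real.rpow_natCast, ← Real.rpow_mul (by linarith)]
    norm_num
  have hδ := h (1 / (2 * u)) ⟨by positivity, by
    rw [div_le_div_iff₀ (by positivity) (by norm_num)]; linarith⟩
  rw [← hu3] at hδ
  field_simp at hδ
  nlinarith

theorem abs_le_two_mul_rpow_of_convexOn_add_sq {D : ℝ → ℝ} {c z : ℝ} (hc : 1 ≤ c)
    (hD : ConvexOn ℝ (Icc 0 1) fun t => D t + c / 2 * t ^ 2)
    (hcont : ContinuousOn D (Icc 0 1)) (hD0 : D 0 = 0) (hmax : IsMaxOn D (Icc 0 1) z)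
    (hgap : ∫ t in (0 : ℝ)..1, (D z - D t) ≤ 1 / 5) {t : ℝ} (ht : t ∈ Icc 0 1) :
    |D t| ≤ 2 * c ^ (1 / 3 : ℝ) := by
  obtain ⟨t₀, ht₀, hmin⟩ := isCompact_Icc.exists_isMinOn (nonempty_Icc.2 zero_le_one) hcont
  have hrange : D z - D t₀ ≤ 2 * c ^ (1 / 3 : ℝ) := le_two_mul_rpow_of_forall hc
    fun δ hδ => (integral_sub_ge_of_convexOn_add_sq hD hcont hmax ht₀ hδ).trans hgap
  have h0 : (0 : ℝ) ∈ Icc 0 1 := left_mem_Icc.2 zero_le_one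
  rw [abs_le]
  constructor <;> linarith [isMaxOn_iff.1 hmax t ht, isMinOn_iff.1 hmin t ht,
    isMaxOn_iff.1 hmax 0 h0, isMinOn_iff.1 hmin 0 h0]

theorem integral_primitive_eq_integral_sub_mul {G : ℝ → ℝ} {a b : ℝ}
    (hG : IntervalIntegrable G volume a b) :
    ∫ t in a..b, ∫ y in a..t, G y = ∫ y in a..b, (b - y) * G y := by
  have hD := hG.absolutelyContinuousOnInterval_intervalIntegral (c := a) left_mem_uIcc
  have hlin : AbsolutelyContinuousOnInterval (fun y => b - y) a b :=
    (contDiff_const.sub contDiff_id).contDiffOn.absolutelyContinuousOnInterval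
  have hparts := hlin.integral_mul_deriv_eq_deriv_mul hD
  have hderiv : ∀ᵐ y, y ∈ Ι a b →
      (b - y) * deriv (fun t => ∫ s in a..t, G s) y = (b - y) * G y := by
    filter_upwards [hG.ae_hasDerivAt_integral] with y hy hyab
    rw [(hy (uIoc_subset_uIcc hyab) a left_mem_uIcc).deriv]
  rw [intervalIntegral.integral_congr_ae hderiv] at hparts
  simp [hparts]

theorem IntervalIntegrable.ite_le {f : ℝ → ℝ} {a b : ℝ} (hf : IntervalIntegrable f volume a b)
    (z : ℝ) : IntervalIntegrable (fun y => if z ≤ y then f y else 0) volume a b := by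
  have hind : (fun y => if z ≤ y then f y else 0) = (Ici z).indicator f := by
    ext y; simp [indicator]
  rw [hind, intervalIntegrable_iff]
  exact (intervalIntegrable_iff.1 hf).indicator measurableSet_Ici

theorem intervalIntegral_ite_le {f : ℝ → ℝ} {a b z : ℝ} (hf : IntervalIntegrable f volume a b)
    (hz : z ∈ Icc a b) :
    ∫ y in a..b, (if z ≤ y then f y else 0) = ∫ y in z..b, f y := by
  obtain ⟨haz, hzb⟩ := hz
  have hz' : z ∈ [[a, b]] := by rw [uIcc_of_le (haz.trans hzb)]; exact ⟨haz, hzb⟩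
  have hg := hf.ite_le z
  have hzero : ∫ y in a..z, (if z ≤ y then f y else 0) = ∫ _ in a..z, (0 : ℝ) :=
    intervalIntegral.integral_congr_uIoo fun y hy => by
      rw [uIoo_of_le haz] at hy
      simp [hy.2]
  have hsame : ∫ y in z..b, (if z ≤ y then f y else 0) = ∫ y in z..b, f y :=
    intervalIntegral.integral_congr fun y hy => by
      rw [uIcc_of_le hzb] at hy
      simp [hy.1]
  rw [← intervalIntegral.integral_add_adjacent_intervals
    (hg.mono_set (uIcc_subset_uIcc left_mem_uIcc hz'))
    (hg.mono_set (uIcc_subset_uIcc hz' right_mem_uIcc)), hzero, hsame,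
    intervalIntegral.integral_zero, zero_add]

theorem ite_sub_mul (z y c : ℝ) :
    ((if z ≤ y then 1 else 0) - y) * c = (if z ≤ y then c else 0) - y * c := by
  split_ifs <;> ring

theorem ite_sub_sq (z y : ℝ) :
    ((if z ≤ y then 1 else 0) - y) ^ 2 = (if z ≤ y then 1 - 2 * y else 0) + y ^ 2 := by
  split_ifs <;> ring

theorem integral_ite_sub_mul {G : ℝ → ℝ} {z : ℝ} (hG : IntervalIntegrable G volume 0 1)
    (hz : z ∈ Icc (0 : ℝ) 1) :
    ∫ y in (0 : ℝ)..1, ((if z ≤ y then 1 else 0) - y) * G y =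
      -∫ t in (0 : ℝ)..1, ((∫ y in (0 : ℝ)..z, G y) - ∫ y in (0 : ℝ)..t, G y) := by
  have hz' : z ∈ [[(0 : ℝ), 1]] := by rwa [uIcc_of_le zero_le_one]
  have hyG : IntervalIntegrable (fun y => y * G y) volume 0 1 :=
    hG.continuousOn_mul continuous_id.continuousOn
  simp only [ite_sub_mul]
  rw [intervalIntegral.integral_sub (hG.ite_le z) hyG, intervalIntegral_ite_le hG hz,
    intervalIntegral.integral_sub intervalIntegrable_const
      (intervalIntegral.continuousOn_primitive_interval' hG left_mem_uIcc).intervalIntegrable,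
    intervalIntegral.integral_const, smul_eq_mul, integral_primitive_eq_integral_sub_mul hG]
  have hweight : ∫ y in (0 : ℝ)..1, (1 - y) * G y =
      (∫ y in (0 : ℝ)..1, G y) - ∫ y in (0 : ℝ)..1, y * G y := by
    simp only [sub_mul, one_mul]
    exact intervalIntegral.integral_sub hG hyG
  rw [hweight, ← intervalIntegral.integral_interval_sub_left hG
    (hG.mono_set (uIcc_subset_uIcc left_mem_uIcc hz'))]
  ring

theorem integral_ite_sub_sq {z : ℝ} (hz : z ∈ Icc (0 : ℝ) 1) :
    ∫ y in (0 : ℝ)..1, ((if z ≤ y then 1 else 0) - y) ^ 2 = z ^ 2 - z + 1 / 3 := by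
  have hlin : IntervalIntegrable (fun y : ℝ => 1 - 2 * y) volume 0 1 := by
    apply Continuous.intervalIntegrable; fun_prop
  simp only [ite_sub_sq]
  rw [intervalIntegral.integral_add (hlin.ite_le z) ((continuous_pow 2).intervalIntegrable _ _),
    intervalIntegral_ite_le hlin hz, intervalIntegral.integral_sub intervalIntegrable_const
      ((continuous_const_mul 2).intervalIntegrable _ _), intervalIntegral.integral_const,
    intervalIntegral.integral_const_mul, integral_id, integral_pow, smul_eq_mul]
  ring

theorem integral_add_ite_sub_sq {G : ℝ → ℝ} {z : ℝ} (hG : IntervalIntegrable G volume 0 1)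
    (hG2 : IntervalIntegrable (fun y => G y ^ 2) volume 0 1) (hz : z ∈ Icc (0 : ℝ) 1) :
    ∫ y in (0 : ℝ)..1, (G y + ((if z ≤ y then 1 else 0) - y)) ^ 2 =
      (∫ y in (0 : ℝ)..1, G y ^ 2)
        - 2 * (∫ t in (0 : ℝ)..1, ((∫ y in (0 : ℝ)..z, G y) - ∫ y in (0 : ℝ)..t, G y))
        + (z ^ 2 - z + 1 / 3) := by
  have hyG : IntervalIntegrable (fun y => y * G y) volume 0 1 :=
    hG.continuousOn_mul continuous_id.continuousOn
  have hlin : IntervalIntegrable (fun y : ℝ => 1 - 2 * y) volume 0 1 := by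
    apply Continuous.intervalIntegrable; fun_prop
  have hsq : IntervalIntegrable (fun y : ℝ => y ^ 2) volume 0 1 :=
    (continuous_pow 2).intervalIntegrable _ _
  have hkG : IntervalIntegrable (fun y => ((if z ≤ y then 1 else 0) - y) * G y) volume 0 1 := by
    simpa only [ite_sub_mul] using (hG.ite_le z).sub hyG
  have hk2 : IntervalIntegrable (fun y => ((if z ≤ y then 1 else 0) - y) ^ 2) volume 0 1 := by
    simpa only [ite_sub_sq] using (hlin.ite_le z).add hsq
  have hexpand : ∀ y, (G y + ((if z ≤ y then 1 else 0) - y)) ^ 2 =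
      G y ^ 2 + 2 * (((if z ≤ y then 1 else 0) - y) * G y)
        + ((if z ≤ y then 1 else 0) - y) ^ 2 := fun y => by ring
  simp only [hexpand]
  rw [intervalIntegral.integral_add (hG2.add (hkG.const_mul 2)) hk2,
    intervalIntegral.integral_add hG2 (hkG.const_mul 2), intervalIntegral.integral_const_mul,
    integral_ite_sub_mul hG hz, integral_ite_sub_sq hz]
  ring

section Telescoping

variable {L e : ℕ → ℝ} {n₀ : ℕ}

theorem le_add_mul_of_le_sub (hstep : ∀ n, n₀ ≤ n → L (n + 1) ≤ L n + 1 / 3 - 2 * e n)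
    {m : ℕ} (hm : n₀ ≤ m) {a : ℝ} :
    ∀ k : ℕ, (∀ i, m ≤ i → i < m + k → a ≤ e i) → L (m + k) ≤ L m + k * (1 / 3 - 2 * a)
  | 0, _ => by simp
  | k + 1, he => by
    have ih := le_add_mul_of_le_sub hstep hm k fun i hi hik => he i hi (by omega)
    have hk := hstep (m + k) (by omega)
    have hek := he (m + k) (by omega) (by omega)
    push_cast
    rw [← add_assoc]
    linarith

theorem exists_le_one_fifth_of_le_sub (hL : ∀ n, 0 ≤ L n) (he : ∀ n, n₀ ≤ n → 0 ≤ e n)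
    (hstep : ∀ n, n₀ ≤ n → L (n + 1) ≤ L n + 1 / 3 - 2 * e n) :
    ∃ N₀, ∀ N, N₀ ≤ N → ∃ n, N ≤ n ∧ n ≤ 100 * N ∧ e n ≤ 1 / 5 := by
  refine ⟨n₀ + ⌈L n₀⌉₊ + 1, fun N hN => ?_⟩
  by_contra! hbig
  obtain ⟨k, rfl⟩ : ∃ k, N = n₀ + k := ⟨N - n₀, by omega⟩
  have hfirst := le_add_mul_of_le_sub hstep le_rfl k fun i hi _ => he i hi
  have hlast := le_add_mul_of_le_sub hstep (Nat.le_add_right n₀ k) (99 * (n₀ + k))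
    fun i hi hik => (hbig i hi (by omega)).le
  have hceil : L n₀ < n₀ + k := by
    have : (⌈L n₀⌉₊ : ℝ) + 1 ≤ n₀ + k := by exact_mod_cast (show ⌈L n₀⌉₊ + 1 ≤ n₀ + k by omega)
    linarith [Nat.le_ceil (L n₀)]
  have := hL (n₀ + k + 99 * (n₀ + k))
  push_cast at hfirst hlast hceil
  linarith

end Telescoping

section Discrepancy

variable (x : ℕ → ℝ) (n : ℕ)

theorem monotone_seqCount : Monotone fun y => (seqCount x n y : ℝ) :=
  fun _ _ h => Nat.mono_cast <|
    Finset.card_le_card (Finset.monotone_filter_right _ fun _ _ hk => hk.trans h)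

theorem seqCount_le (y : ℝ) : seqCount x n y ≤ n :=
  (Finset.card_filter_le _ _).trans (by simp)

theorem seqCount_succ (y : ℝ) :
    (seqCount x (n + 1) y : ℝ) = seqCount x n y + if x (n + 1) ≤ y then 1 else 0 := by
  rw [seqCount, ← Finset.insert_Icc_right_eq_Icc_add_one (Nat.le_add_left 1 n),
    Finset.filter_insert]
  split_ifs with h
  · rw [Finset.card_insert_of_notMem (by simp), Nat.cast_succ, seqCount]
  · simp [seqCount]

noncomputable def localDiscrepancy (y : ℝ) : ℝ := seqCount x n y - n * y

noncomputable def l2Discrepancy : ℝ := ∫ y in (0 : ℝ)..1, localDiscrepancy x n y ^ 2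

theorem monotone_localDiscrepancy_add : Monotone fun y => localDiscrepancy x n y + n * y := by
  simpa [localDiscrepancy] using monotone_seqCount x n

theorem intervalIntegrable_localDiscrepancy (a b : ℝ) :
    IntervalIntegrable (localDiscrepancy x n) volume a b := by
  simpa using (monotone_localDiscrepancy_add x n).intervalIntegrable.sub
    ((continuous_const_mul (n : ℝ)).intervalIntegrable a b)

theorem abs_localDiscrepancy_le {y : ℝ} (hy : y ∈ Icc (0 : ℝ) 1) :
    |localDiscrepancy x n y| ≤ n := by
  have hcount : (seqCount x n y : ℝ) ≤ n := by exact_mod_cast seqCount_le x n y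
  have hny : (n : ℝ) * y ≤ n := mul_le_of_le_one_right n.cast_nonneg hy.2
  rw [localDiscrepancy, abs_le]
  constructor <;> linarith [(seqCount x n y).cast_nonneg (α := ℝ), mul_nonneg n.cast_nonneg hy.1]

theorem intervalIntegrable_localDiscrepancy_sq :
    IntervalIntegrable (fun y => localDiscrepancy x n y ^ 2) volume 0 1 := by
  have hmeas : Measurable (localDiscrepancy x n) :=
    (monotone_seqCount x n).measurable.sub (measurable_const_mul _)
  refine (intervalIntegrable_iff_integrableOn_Ioc_of_le zero_le_one).2
    (Measure.integrableOn_of_bounded (M := (n : ℝ) ^ 2) (by simp)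
      (hmeas.pow_const 2).aestronglyMeasurable ?_)
  filter_upwards [ae_restrict_mem measurableSet_Ioc] with y hy
  rw [Real.norm_eq_abs, abs_pow]
  exact pow_le_pow_left₀ (abs_nonneg _) (abs_localDiscrepancy_le x n ⟨hy.1.le, hy.2⟩) 2

theorem l2Discrepancy_nonneg : 0 ≤ l2Discrepancy x n :=
  intervalIntegral.integral_nonneg zero_le_one fun _ _ => sq_nonneg _

variable {x n}

theorem IsKritzinger.l2Discrepancy_succ_le {n₀ : ℕ} (hK : IsKritzinger x n₀) (hn : n₀ ≤ n)
    {z : ℝ} (hz : z ∈ Icc (0 : ℝ) 1) :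
    l2Discrepancy x (n + 1) ≤ l2Discrepancy x n + 1 / 3 - 2 * ∫ t in (0 : ℝ)..1,
      ((∫ y in (0 : ℝ)..z, localDiscrepancy x n y) - ∫ y in (0 : ℝ)..t, localDiscrepancy x n y) := by
  have hform : ∀ w y : ℝ, ((seqCount x n y : ℝ) + (if w ≤ y then 1 else 0) - ((n : ℝ) + 1) * y) ^ 2
      = (localDiscrepancy x n y + ((if w ≤ y then 1 else 0) - y)) ^ 2 := fun w y => by
    rw [localDiscrepancy]; ring
  have hgreedy := hK.2 n hn z hz
  simp only [hform] at hgreedy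
  rw [integral_add_ite_sub_sq (intervalIntegrable_localDiscrepancy x n 0 1)
    (intervalIntegrable_localDiscrepancy_sq x n) hz] at hgreedy
  have hsucc : l2Discrepancy x (n + 1) = ∫ y in (0 : ℝ)..1,
      (localDiscrepancy x n y + ((if x (n + 1) ≤ y then 1 else 0) - y)) ^ 2 := by
    simp only [l2Discrepancy, ← hform]
    congr 1; ext y
    rw [localDiscrepancy, seqCount_succ, Nat.cast_succ]
  have hz2 : z ^ 2 - z ≤ 0 := by nlinarith [hz.1, hz.2]
  rw [hsucc, l2Discrepancy]
  linarith

end Discrepancy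

theorem stmt_16_general (x : ℕ → ℝ) (n₀ : ℕ)
    (hK : IsKritzinger x n₀) :
    ∃ N₀ : ℕ, ∀ N : ℕ, N₀ ≤ N → ∃ n : ℕ, N ≤ n ∧ n ≤ 100 * N ∧
      ∀ t ∈ Set.Icc (0 : ℝ) 1,
        |∫ y in (0:ℝ)..t, ((seqCount x n y : ℝ) - (n : ℝ) * y)|
          ≤ 2 * (n : ℝ) ^ ((1 : ℝ) / 3) := by
  have hcont : ∀ n, Continuous fun t => ∫ y in (0 : ℝ)..t, localDiscrepancy x n y :=
    fun n => intervalIntegral.continuous_primitive (intervalIntegrable_localDiscrepancy x n) 0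
  choose z hz using fun n =>
    isCompact_Icc.exists_isMaxOn (nonempty_Icc.2 zero_le_one) (hcont n).continuousOn
  obtain ⟨N₀, hN₀⟩ := exists_le_one_fifth_of_le_sub (l2Discrepancy_nonneg x)
    (fun n _ => intervalIntegral.integral_nonneg zero_le_one fun t ht =>
      sub_nonneg.2 (isMaxOn_iff.1 (hz n).2 t ht))
    fun n hn => hK.l2Discrepancy_succ_le hn (hz n).1
  refine ⟨max N₀ 1, fun N hN => ?_⟩
  obtain ⟨n, hNn, hn100, hgap⟩ := hN₀ N (le_of_max_le_left hN)
  refine ⟨n, hNn, hn100, fun t ht => ?_⟩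
  have hn : (1 : ℝ) ≤ n := by exact_mod_cast (le_of_max_le_right hN).trans hNn
  exact abs_le_two_mul_rpow_of_convexOn_add_sq hn
    ((convexOn_intervalIntegral_add_sq (monotone_localDiscrepancy_add x n)).subset
      (subset_univ _) (convex_Icc 0 1))
    (hcont n).continuousOn intervalIntegral.integral_same (hz n).2 hgap ht

theorem stmt_16 (x : ℕ → ℝ) (n₀ : ℕ) (hn₀ : 1 ≤ n₀)
    (hK : IsKritzinger x n₀) :
    ∃ N₀ : ℕ, ∀ N : ℕ, N₀ ≤ N → ∃ n : ℕ, N ≤ n ∧ n ≤ 100 * N ∧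
      ∀ t ∈ Set.Icc (0 : ℝ) 1,
        |∫ y in (0:ℝ)..t, ((seqCount x n y : ℝ) - (n : ℝ) * y)|
          ≤ 2 * (n : ℝ) ^ ((1 : ℝ) / 3) :=
  stmt_16_general x n₀ hK
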